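/- (Theorem 3.1, case d=3; leading asymptotics of the scattering amplitude.) There exist constants C > 0 and κ₀ > 0 such that for all κ ≥ κ₀ the matrix A(κ) is invertible and for all k, ℓ ∈ ℝ³ with |k| = |ℓ| = κ one has |f(k,ℓ) − κ^{−1} Σ_{j=1}^n (−i/(2π²)) e^{i(k−ℓ)·y_j} − κ^{−2} [ −Σ_{j=1}^n (2α_j/π) e^{i(k−ℓ)·y_j} + Σ_{j≠j'} e^{iκ|y_j−y_{j'}|}/(2π²|y_j−y_{j'}|) · e^{i(k·y_j − ℓ·y_{j'})} ]| ≤ C κ^{−3}. -/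

import Mathlib

open Complex Finset Matrix


noncomputable section

/-- The matrix `A(κ)` for a three-dimensional multipoint potential:
`A(κ)_{jj} = α_j - iκ/(4π)`,
`A(κ)_{jj'} = -e^{iκ‖y_j - y_{j'}‖}/(4π‖y_j - y_{j'}‖)` for `j ≠ j'`. -/
def A3 (n : ℕ) (y : Fin n → EuclideanSpace ℝ (Fin 3)) (α : Fin n → ℂ) (κ : ℝ) :
    Matrix (Fin n) (Fin n) ℂ :=
  fun j j' =>
    if j = j' then α j - Complex.I * κ / (4 * Real.pi)
    else -Complex.exp (Complex.I * κ * ‖y j - y j'‖) / (4 * Real.pi * ‖y j - y j'‖)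

/-- `q(k) = A(κ)⁻¹ b(k)` with `b(k)_j = -e^{i k·y_j}`. -/
def q3 (n : ℕ) (y : Fin n → EuclideanSpace ℝ (Fin 3)) (α : Fin n → ℂ) (κ : ℝ)
    (k : EuclideanSpace ℝ (Fin 3)) : Fin n → ℂ :=
  (A3 n y α κ)⁻¹ *ᵥ fun j => -Complex.exp (Complex.I * (inner ℝ k (y j) : ℝ))

/-- The scattering amplitude `f(k,ℓ) = (2π)⁻³ Σ_j q_j(k) e^{-iℓ·y_j}`. -/
def f3 (n : ℕ) (y : Fin n → EuclideanSpace ℝ (Fin 3)) (α : Fin n → ℂ) (κ : ℝ)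
    (k ℓ : EuclideanSpace ℝ (Fin 3)) : ℂ :=
  ((2 * Real.pi : ℂ) ^ 3)⁻¹ *
    ∑ j, q3 n y α κ k j * Complex.exp (-Complex.I * (inner ℝ ℓ (y j) : ℝ))

/-- The matrix `W(κ)`: `W(κ)_{jj} = α_j`,
`W(κ)_{jj'} = -e^{iκ‖y_j - y_{j'}‖}/(4π‖y_j - y_{j'}‖)` for `j ≠ j'`. -/
def W3 (n : ℕ) (y : Fin n → EuclideanSpace ℝ (Fin 3)) (α : Fin n → ℂ) (κ : ℝ) :
    Matrix (Fin n) (Fin n) ℂ :=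
  fun j j' =>
    if j = j' then α j
    else -Complex.exp (Complex.I * κ * ‖y j - y j'‖) / (4 * Real.pi * ‖y j - y j'‖)

/-- The coefficients `C_m(k,ℓ) = Σ_{j,j'} [W(κ)^m]_{jj'} e^{i(k·y_{j'} - ℓ·y_j)}`. -/
def C3coef (n : ℕ) (y : Fin n → EuclideanSpace ℝ (Fin 3)) (α : Fin n → ℂ) (κ : ℝ)
    (m : ℕ) (k ℓ : EuclideanSpace ℝ (Fin 3)) : ℂ :=
  ∑ j, ∑ j', (W3 n y α κ ^ m) j j' *
    Complex.exp (Complex.I * ((inner ℝ k (y j') : ℝ) - (inner ℝ ℓ (y j) : ℝ)))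

/-! The moduli of the entries of `W(κ)` do not depend on `κ`, so `W(κ)` is bounded uniformly
in `κ` in the `ℓ^∞` operator norm. Since `A(κ) = ζ - (-W(κ))` with `ζ = -iκ/(4π)`, the inverse
`A(κ)⁻¹` is the resolvent of `-W(κ)` at `ζ`, and for `|ζ| ≥ 2‖W‖` the Neumann series gives
`R(ζ) = ζ⁻¹ + ζ⁻² (-W) + O(‖W‖² |ζ|⁻³)`. The amplitude `f(k,ℓ)` is the bilinear form of `A(κ)⁻¹`
against unimodular plane waves, so the first two terms of the expansion are the stated
`κ⁻¹` and `κ⁻²` terms and the remainder is `O(κ⁻³)`. -/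

attribute [local instance] Matrix.linftyOpNormedAddCommGroup Matrix.linftyOpNormedRing
  Matrix.linftyOpNormedAlgebra

section BanachAlgebra

open Ring

variable {𝕜 R : Type*} [NontriviallyNormedField 𝕜] [NormedRing R] [NormedAlgebra 𝕜 R]
  [HasSummableGeomSeries R]

theorem norm_ringInverse_one_sub_sub_le {x : R} (hx : ‖x‖ < 1) :
    ‖(1 - x)⁻¹ʳ - 1 - x‖ ≤ ‖x‖ ^ 2 / (1 - ‖x‖) := by
  have htail : HasSum (fun i ↦ x ^ (i + 2)) ((1 - x)⁻¹ʳ - 1 - x) := by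
    have := (hasSum_nat_add_iff' 2).mpr (hasSum_geom_series_inverse x hx)
    simpa [Finset.sum_range_succ, sub_sub] using this
  have hbound : HasSum (fun i ↦ ‖x‖ ^ 2 * ‖x‖ ^ i) (‖x‖ ^ 2 * (1 - ‖x‖)⁻¹) :=
    (hasSum_geometric_of_lt_one (norm_nonneg x) hx).mul_left _
  refine htail.norm_le_of_bounded hbound fun i ↦ ?_
  rw [← pow_add, add_comm 2]
  exact norm_pow_le' x (by omega)

theorem mem_resolventSet_of_norm_lt' {a : R} {z : 𝕜} (h : ‖a‖ < ‖z‖) : z ∈ resolventSet 𝕜 a := by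
  have hz : z ≠ 0 := norm_pos_iff.mp ((norm_nonneg a).trans_lt h)
  rw [spectrum.mem_resolventSet_iff, Algebra.algebraMap_eq_smul_one, ← Units.val_mk0 hz,
    ← Units.smul_def, IsUnit.smul_sub_iff_sub_inv_smul]
  refine isUnit_one_sub_of_norm_lt_one ?_
  rw [Units.smul_def, Units.val_inv_eq_inv_val, Units.val_mk0, norm_smul, norm_inv,
    inv_mul_lt_iff₀ ((norm_nonneg a).trans_lt h), mul_one]
  exact h

theorem norm_resolvent_sub_le {a : R} {z : 𝕜} (hz : z ≠ 0) (h : 2 * ‖a‖ ≤ ‖z‖) :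
    ‖resolvent a z - z⁻¹ • 1 - z⁻¹ ^ 2 • a‖ ≤ 2 * ‖a‖ ^ 2 / ‖z‖ ^ 3 := by
  have hz' : 0 < ‖z‖ := norm_pos_iff.mpr hz
  set t := z⁻¹ • a
  have ht : ‖t‖ = ‖a‖ / ‖z‖ := by rw [norm_smul, norm_inv, inv_mul_eq_div]
  have ht2 : ‖t‖ ≤ 1 / 2 := by rw [ht, div_le_iff₀ hz']; linarith
  have hres : resolvent a z = z⁻¹ • (1 - t)⁻¹ʳ := by
    have := spectrum.units_smul_resolvent_self (r := Units.mk0 z hz) (a := a)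
    simp only [resolvent, Units.smul_def, Units.val_inv_eq_inv_val, Units.val_mk0,
      map_one] at this
    rw [← this, smul_smul, inv_mul_cancel₀ hz, one_smul, resolvent]
  have hdiff : resolvent a z - z⁻¹ • 1 - z⁻¹ ^ 2 • a = z⁻¹ • ((1 - t)⁻¹ʳ - 1 - t) := by
    rw [hres, smul_sub, smul_sub, smul_smul, ← pow_two]
  calc ‖resolvent a z - z⁻¹ • 1 - z⁻¹ ^ 2 • a‖
      = ‖z‖⁻¹ * ‖(1 - t)⁻¹ʳ - 1 - t‖ := by rw [hdiff, norm_smul, norm_inv]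
    _ ≤ ‖z‖⁻¹ * (‖t‖ ^ 2 / (1 - ‖t‖)) := by
        gcongr; exact norm_ringInverse_one_sub_sub_le (by linarith)
    _ ≤ ‖z‖⁻¹ * (2 * ‖t‖ ^ 2) := by
        gcongr; rw [div_le_iff₀ (by linarith)]; nlinarith [norm_nonneg t]
    _ = 2 * ‖a‖ ^ 2 / ‖z‖ ^ 3 := by rw [ht]; field_simp

end BanachAlgebra

theorem norm_dotProduct_mulVec_le {m l α : Type*} [Fintype m] [Fintype l] [NormedRing α]
    (P : Matrix m l α) {u : m → α} {v : l → α} (hu : ∀ i, ‖u i‖ ≤ 1) (hv : ∀ j, ‖v j‖ ≤ 1) :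
    ‖u ⬝ᵥ (P *ᵥ v)‖ ≤ Fintype.card m * ‖P‖ := by
  have hPv : ‖P *ᵥ v‖ ≤ ‖P‖ := by
    calc ‖P *ᵥ v‖ ≤ ‖P‖ * ‖v‖ := linfty_opNorm_mulVec P v
      _ ≤ ‖P‖ * 1 := by gcongr; exact (pi_norm_le_iff_of_nonneg zero_le_one).mpr hv
      _ = ‖P‖ := mul_one _
  calc ‖u ⬝ᵥ (P *ᵥ v)‖ ≤ ∑ i, ‖u i‖ * ‖(P *ᵥ v) i‖ :=
        (norm_sum_le _ _).trans (sum_le_sum fun i _ ↦ norm_mul_le _ _)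
    _ ≤ ∑ _i : m, ‖P‖ := by
        gcongr with i
        exact (mul_le_of_le_one_left (norm_nonneg _) (hu i)).trans
          ((norm_le_pi_norm _ i).trans hPv)
    _ = Fintype.card m * ‖P‖ := by rw [sum_const, card_univ, nsmul_eq_mul]

section PlaneWave

variable {ι E : Type*} [NormedAddCommGroup E] [InnerProductSpace ℝ E]

def planeWave (y : ι → E) (k : E) : ι → ℂ := fun j ↦ exp (I * (inner ℝ k (y j) : ℝ))

theorem norm_planeWave_apply (y : ι → E) (k : E) (j : ι) : ‖planeWave y k j‖ = 1 :=
  norm_exp_I_mul_ofReal _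

theorem planeWave_mul_planeWave_apply (y : ι → E) (k ℓ : E) (j : ι) :
    planeWave y k j * planeWave y ℓ j = planeWave y (k + ℓ) j := by
  simp only [planeWave, ← Complex.exp_add, inner_add_left]
  push_cast
  ring_nf

theorem norm_amplitude_form_le [Fintype ι] (y : ι → E) (P : Matrix ι ι ℂ) (k ℓ : E) :
    ‖-((2 * Real.pi : ℂ) ^ 3)⁻¹ * (planeWave y (-ℓ) ⬝ᵥ (P *ᵥ planeWave y k))‖ ≤
      ((2 * Real.pi) ^ 3)⁻¹ * (Fintype.card ι * ‖P‖) := by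
  have hc : ‖-((2 * Real.pi : ℂ) ^ 3)⁻¹‖ = ((2 * Real.pi) ^ 3)⁻¹ := by
    simp [abs_of_pos Real.pi_pos]
  rw [norm_mul, hc]
  gcongr
  exact norm_dotProduct_mulVec_le _ (fun j ↦ (norm_planeWave_apply y (-ℓ) j).le)
    (fun j ↦ (norm_planeWave_apply y k j).le)

end PlaneWave

section ThreeDim

variable (n : ℕ) (y : Fin n → EuclideanSpace ℝ (Fin 3)) (α : Fin n → ℂ)

theorem norm_W3_apply_eq_norm_W3_zero_apply (κ : ℝ) (j j' : Fin n) :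
    ‖W3 n y α κ j j'‖ = ‖W3 n y α 0 j j'‖ := by
  unfold W3
  split_ifs
  · rfl
  · simp [Complex.norm_exp]

theorem norm_W3_eq_norm_W3_zero (κ : ℝ) :
    ‖W3 n y α κ‖ = ‖W3 n y α 0‖ := by
  have h (j j' : Fin n) : ‖W3 n y α κ j j'‖₊ = ‖W3 n y α 0 j j'‖₊ :=
    NNReal.eq (norm_W3_apply_eq_norm_W3_zero_apply n y α κ j j')
  simp only [linfty_opNorm_def, h]

def spectralParam (κ : ℝ) : ℂ := -(I * κ / (4 * Real.pi))

theorem norm_spectralParam {κ : ℝ} (hκ : 0 ≤ κ) : ‖spectralParam κ‖ = κ / (4 * Real.pi) := by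
  simp [spectralParam, abs_of_nonneg hκ, abs_of_pos Real.pi_pos]

theorem two_mul_norm_neg_W3_le_norm_spectralParam {κ : ℝ} (hκ : 8 * Real.pi * ‖W3 n y α 0‖ ≤ κ) :
    2 * ‖-W3 n y α κ‖ ≤ ‖spectralParam κ‖ := by
  have hκ0 : 0 ≤ κ := le_trans (by positivity) hκ
  rw [norm_neg, norm_W3_eq_norm_W3_zero, norm_spectralParam hκ0, le_div_iff₀ (by positivity)]
  linarith

theorem A3_eq_algebraMap_sub (κ : ℝ) :
    A3 n y α κ = algebraMap ℂ _ (spectralParam κ) - -W3 n y α κ := by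
  ext j j'
  by_cases h : j = j' <;>
    simp [A3, W3, spectralParam, algebraMap_matrix_apply, h, sub_eq_add_neg, add_comm]

theorem f3_eq_dotProduct (κ : ℝ) (k ℓ : EuclideanSpace ℝ (Fin 3)) :
    f3 n y α κ k ℓ =
      -((2 * Real.pi : ℂ) ^ 3)⁻¹ * (planeWave y (-ℓ) ⬝ᵥ ((A3 n y α κ)⁻¹ *ᵥ planeWave y k)) := by
  have hb : (fun j ↦ -exp (I * (inner ℝ k (y j) : ℝ))) = -planeWave y k := rfl
  have hu (j : Fin n) : exp (-(I * (inner ℝ ℓ (y j) : ℝ))) = planeWave y (-ℓ) j := by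
    simp [planeWave, inner_neg_left]
  simp only [f3, q3, hb, mulVec_neg, neg_mul, hu, dotProduct, Pi.neg_apply, sum_neg_distrib,
    mul_neg, mul_comm]

theorem first_order_term_eq (κ : ℝ) (k ℓ : EuclideanSpace ℝ (Fin 3)) :
    (κ : ℂ)⁻¹ * ∑ j, (-I / (2 * (Real.pi : ℂ) ^ 2)) * exp (I * (inner ℝ (k - ℓ) (y j) : ℝ)) =
      -((2 * Real.pi : ℂ) ^ 3)⁻¹ * (planeWave y (-ℓ) ⬝ᵥ
        (((spectralParam κ)⁻¹ • 1 : Matrix (Fin n) (Fin n) ℂ) *ᵥ planeWave y k)) := by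
  have hc : -((2 * Real.pi : ℂ) ^ 3)⁻¹ * (spectralParam κ)⁻¹ =
      (κ : ℂ)⁻¹ * (-I / (2 * (Real.pi : ℂ) ^ 2)) := by
    have hπ : (Real.pi : ℂ) ≠ 0 := ofReal_ne_zero.mpr Real.pi_ne_zero
    simp only [spectralParam, inv_neg, div_eq_mul_inv, mul_inv, inv_inv, inv_I]
    field_simp
    ring
  rw [smul_mulVec, one_mulVec, dotProduct_smul, smul_eq_mul, ← mul_assoc, hc, mul_assoc]
  simp only [dotProduct, planeWave_mul_planeWave_apply, neg_add_eq_sub, mul_sum]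
  rfl

theorem second_order_sum_eq (κ : ℝ) (k ℓ : EuclideanSpace ℝ (Fin 3)) :
    -∑ j, 2 * α j / (Real.pi : ℂ) * exp (I * (inner ℝ (k - ℓ) (y j) : ℝ)) +
        ∑ j, ∑ j', (if j = j' then 0 else
          exp (I * κ * ‖y j - y j'‖) / (2 * (Real.pi : ℂ) ^ 2 * ‖y j - y j'‖) *
            exp (I * ((inner ℝ k (y j) : ℝ) - (inner ℝ ℓ (y j') : ℝ)))) =
      -(2 / Real.pi) * (planeWave y (-ℓ) ⬝ᵥ (W3 n y α κ *ᵥ planeWave y k)) := by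
  have hdiag : -∑ j, 2 * α j / (Real.pi : ℂ) * exp (I * (inner ℝ (k - ℓ) (y j) : ℝ)) =
      ∑ j, ∑ j' : Fin n, if j = j' then
        -(2 * α j / (Real.pi : ℂ) * exp (I * (inner ℝ (k - ℓ) (y j) : ℝ))) else 0 := by
    simp only [sum_ite_eq, mem_univ, if_true, sum_neg_distrib]
  simp only [hdiag, ← sum_add_distrib, dotProduct, mulVec, mul_sum]
  rw [sum_comm]
  refine sum_congr rfl fun j _ ↦ sum_congr rfl fun j' _ ↦ ?_
  by_cases h : j = j'
  · subst h
    have he : exp (I * (inner ℝ (k - ℓ) (y j) : ℝ)) = planeWave y (-ℓ) j * planeWave y k j := by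
      rw [planeWave_mul_planeWave_apply, neg_add_eq_sub]
      rfl
    simp only [W3, if_true, add_zero, he]
    ring
  · have he : exp (I * ((inner ℝ k (y j') : ℝ) - (inner ℝ ℓ (y j) : ℝ))) =
        planeWave y (-ℓ) j * planeWave y k j' := by
      simp only [planeWave, ← Complex.exp_add, inner_neg_left]
      push_cast
      ring_nf
    simp only [W3, if_neg h, if_neg (Ne.symm h), zero_add, he, norm_sub_rev (y j')]
    ring

theorem second_order_term_eq (κ : ℝ) (k ℓ : EuclideanSpace ℝ (Fin 3)) :
    ((κ : ℂ) ^ 2)⁻¹ *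
        (-∑ j, 2 * α j / (Real.pi : ℂ) * exp (I * (inner ℝ (k - ℓ) (y j) : ℝ)) +
          ∑ j, ∑ j', (if j = j' then 0 else
            exp (I * κ * ‖y j - y j'‖) / (2 * (Real.pi : ℂ) ^ 2 * ‖y j - y j'‖) *
              exp (I * ((inner ℝ k (y j) : ℝ) - (inner ℝ ℓ (y j') : ℝ))))) =
      -((2 * Real.pi : ℂ) ^ 3)⁻¹ * (planeWave y (-ℓ) ⬝ᵥ
        (((spectralParam κ)⁻¹ ^ 2 • -W3 n y α κ) *ᵥ planeWave y k)) := by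
  have hc : -((2 * Real.pi : ℂ) ^ 3)⁻¹ * (spectralParam κ)⁻¹ ^ 2 =
      ((κ : ℂ) ^ 2)⁻¹ * (2 / Real.pi) := by
    have hπ : (Real.pi : ℂ) ≠ 0 := ofReal_ne_zero.mpr Real.pi_ne_zero
    simp only [spectralParam, inv_neg, div_eq_mul_inv, mul_inv, inv_inv, inv_I]
    field_simp
    ring_nf
    simp [I_sq]
  rw [second_order_sum_eq, smul_mulVec, neg_mulVec, dotProduct_smul, dotProduct_neg, smul_eq_mul]
  linear_combination (planeWave y (-ℓ) ⬝ᵥ (W3 n y α κ *ᵥ planeWave y k)) * hc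

end ThreeDim

theorem stmt2 (n : ℕ) (y : Fin n → EuclideanSpace ℝ (Fin 3)) (α : Fin n → ℂ) :
    ∃ C > (0 : ℝ), ∃ κ₀ > (0 : ℝ), ∀ κ ≥ κ₀, IsUnit (A3 n y α κ) ∧
      ∀ k ℓ : EuclideanSpace ℝ (Fin 3), ‖k‖ = κ → ‖ℓ‖ = κ →
        ‖f3 n y α κ k ℓ -
            (κ : ℂ)⁻¹ * ∑ j, (-Complex.I / (2 * (Real.pi : ℂ) ^ 2)) *
              Complex.exp (Complex.I * (inner ℝ (k - ℓ) (y j) : ℝ)) -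
            ((κ : ℂ) ^ 2)⁻¹ *
              (-∑ j, 2 * α j / (Real.pi : ℂ) *
                  Complex.exp (Complex.I * (inner ℝ (k - ℓ) (y j) : ℝ)) +
               ∑ j, ∑ j', if j = j' then 0 else
                 Complex.exp (Complex.I * κ * ‖y j - y j'‖) /
                     (2 * (Real.pi : ℂ) ^ 2 * ‖y j - y j'‖) *
                   Complex.exp (Complex.I *
                     ((inner ℝ k (y j) : ℝ) - (inner ℝ ℓ (y j') : ℝ))))‖ ≤
          C / κ ^ 3 := by
  set E := ‖W3 n y α 0‖
  refine ⟨16 * n * E ^ 2 + 1, by positivity, 8 * Real.pi * E + 1, by positivity, fun κ hκ ↦ ?_⟩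
  have hκ0 : 0 < κ := lt_of_lt_of_le (by positivity) hκ
  have hζ : ‖spectralParam κ‖ = κ / (4 * Real.pi) := norm_spectralParam hκ0.le
  have hζ0 : 0 < ‖spectralParam κ‖ := by rw [hζ]; positivity
  have hWζ := two_mul_norm_neg_W3_le_norm_spectralParam n y α (by linarith : 8 * Real.pi * E ≤ κ)
  have hA := A3_eq_algebraMap_sub n y α κ
  have hres : spectralParam κ ∈ resolventSet ℂ (-W3 n y α κ) :=
    mem_resolventSet_of_norm_lt' (by linarith [norm_nonneg (-W3 n y α κ)])
  refine ⟨hA ▸ hres, fun k ℓ _ _ ↦ ?_⟩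
  have hinv : (A3 n y α κ)⁻¹ = resolvent (-W3 n y α κ) (spectralParam κ) := by
    rw [nonsing_inv_eq_ringInverse, hA]
    rfl
  rw [f3_eq_dotProduct, first_order_term_eq, second_order_term_eq, hinv, ← mul_sub, ← mul_sub,
    ← dotProduct_sub, ← dotProduct_sub, ← sub_mulVec, ← sub_mulVec]
  calc _ ≤ ((2 * Real.pi) ^ 3)⁻¹ * (n * ‖resolvent (-W3 n y α κ) (spectralParam κ) -
          (spectralParam κ)⁻¹ • 1 - (spectralParam κ)⁻¹ ^ 2 • -W3 n y α κ‖) := by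
        simpa using norm_amplitude_form_le y _ k ℓ
    _ ≤ ((2 * Real.pi) ^ 3)⁻¹ * (n * (2 * E ^ 2 / (κ / (4 * Real.pi)) ^ 3)) := by
        gcongr
        simpa only [norm_neg, norm_W3_eq_norm_W3_zero, hζ] using
          norm_resolvent_sub_le (norm_pos_iff.mp hζ0) hWζ
    _ = 16 * n * E ^ 2 / κ ^ 3 := by
        field_simp
        ring
    _ ≤ (16 * n * E ^ 2 + 1) / κ ^ 3 := by gcongr; linarith
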